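/- arXiv:0704.1230 — 2 statements merged into one kernel-verified Lean document; each statement's English description precedes it below -/
import Mathlib

section
/- Let m₁, m₂ be order functions on E × E* with E = ℝ^{2n}, J the standard symplectic matrix on ℝ^{2n}. Define m₃(z, z*) as the integral of m₁(x, x*)·m₂(y, y*) over the affine subspace Σ(z,z*) = {(x,x*,y,y*) : (1/2)Jx* − x = (1/2)Jz* − z, (1/2)Jy* + y = (1/2)Jz* + z, x* + y* = z*}. If this integral is finite for one value of (z, z*), then it is finite for all (z, z*), and m₃ is an order function with exponent 2N₀ where N₀ is a common exponent for m₁ and m₂. Indeed m₃(z+t, z*+t*) ≤ C̃⟨(t,t*)⟩^{2N₀} m₃(z, z*). -/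
open scoped ENNReal
open MeasureTheory

noncomputable def jap {E : Type*} [NormedAddCommGroup E] (x : E) : ℝ :=
  Real.sqrt (1 + ‖x‖ ^ 2)

/-- The Euclidean pairing on `ℝ^{2n}`. -/
def dotp {k : ℕ} (x y : Fin k → ℝ) : ℝ := ∑ i, x i * y i

/-- The integral `m₃(z,z*) = ∫_{Σ(z,z*)} m₁(x,x*) m₂(y,y*)`, where the affine
subspace `Σ(z,z*)` is parametrized by `x`, via
`x* = z* + 2J⁻¹(x−z)`, `y = x + (1/2)Jz*`, `y* = −2J⁻¹(x−z)`. -/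
noncomputable def M3 (n : ℕ)
    (J : (Fin (2*n) → ℝ) ≃ₗ[ℝ] (Fin (2*n) → ℝ))
    (m₁ m₂ : (Fin (2*n) → ℝ) × (Fin (2*n) → ℝ) → ℝ)
    (z zs : Fin (2*n) → ℝ) : ℝ≥0∞ :=
  ∫⁻ x : Fin (2*n) → ℝ,
    ENNReal.ofReal
      (m₁ (x, zs + (2:ℝ) • J.symm (x - z)) *
        m₂ (x + (2⁻¹:ℝ) • J zs, -((2:ℝ) • J.symm (x - z))))

lemma one_le_jap {E : Type*} [NormedAddCommGroup E] (x : E) : 1 ≤ jap x := by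
  rw [jap]
  nth_rewrite 1 [show (1:ℝ) = Real.sqrt 1 by simp]
  exact Real.sqrt_le_sqrt (le_add_of_nonneg_right (by positivity))

lemma jap_pos {E : Type*} [NormedAddCommGroup E] (x : E) : 0 < jap x :=
  lt_of_lt_of_le one_pos (one_le_jap x)

lemma jap_le_mul {E F : Type*} [NormedAddCommGroup E] [NormedAddCommGroup F]
    {a : E} {b : F} {K : ℝ} (hK : 1 ≤ K) (h : ‖a‖ ≤ K * ‖b‖) : jap a ≤ K * jap b := by
  have hK0 : (0:ℝ) ≤ K := le_trans zero_le_one hK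
  have h1 : jap a ≤ Real.sqrt (K^2 * (1 + ‖b‖^2)) := by
    apply Real.sqrt_le_sqrt
    have h2 : ‖a‖^2 ≤ (K*‖b‖)^2 := pow_le_pow_left₀ (norm_nonneg a) h 2
    nlinarith [sq_nonneg K, sq_nonneg (‖b‖)]
  calc jap a ≤ _ := h1
    _ = K * jap b := by rw [Real.sqrt_mul (by positivity), Real.sqrt_sq hK0]; rfl

lemma jap_prod_zero {E F : Type*} [NormedAddCommGroup E] [NormedAddCommGroup F]
    (s : E) : jap ((s, (0:F))) = jap s := by
  simp [jap, Prod.norm_def]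

lemma pi_norm_le_sqrt_dotp (k : ℕ) (v : Fin k → ℝ) : ‖v‖ ≤ Real.sqrt (dotp v v) := by
  rw [pi_norm_le_iff_of_nonneg (Real.sqrt_nonneg _)]
  intro i
  rw [show ‖v i‖ = Real.sqrt ((v i)^2) by rw [Real.sqrt_sq_eq_abs]; rfl]
  apply Real.sqrt_le_sqrt
  rw [dotp]
  calc (v i)^2 = v i * v i := sq (v i)
    _ ≤ ∑ j, v j * v j := Finset.single_le_sum (f := fun j => v j * v j)
        (fun j _ => mul_self_nonneg _) (Finset.mem_univ i)

lemma dotp_le_card (k : ℕ) (v : Fin k → ℝ) : dotp v v ≤ (k:ℝ) * ‖v‖^2 := by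
  rw [dotp]
  calc ∑ i, v i * v i ≤ ∑ _i : Fin k, ‖v‖^2 := by
        apply Finset.sum_le_sum
        intro i _
        have h2 : |v i| ≤ ‖v‖ := Real.norm_eq_abs (v i) ▸ norm_le_pi_norm v i
        nlinarith [abs_mul_abs_self (v i), abs_nonneg (v i)]
    _ = k * ‖v‖^2 := by simp [Finset.sum_const]

/-- If `m₁, m₂` are order functions on `E × E*` with common constants `C₀, N₀`,
then `m₃(z+t, z*+t*) ≤ C̃ ⟨(t,t*)⟩^{2N₀} m₃(z,z*)`; in particular, if the
integral defining `m₃` is finite at one point, it is finite everywhere, and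
`m₃` is an order function of exponent `2N₀`. -/
theorem stmt5 (n : ℕ)
    (J : (Fin (2*n) → ℝ) ≃ₗ[ℝ] (Fin (2*n) → ℝ))
    (hJ2 : ∀ v, J (J v) = -v)
    (hJt : ∀ v w, dotp (J v) w = -dotp v (J w))
    (m₁ m₂ : (Fin (2*n) → ℝ) × (Fin (2*n) → ℝ) → ℝ)
    (C₀ N₀ : ℝ) (hC₀ : 0 < C₀) (hN₀ : 1 ≤ N₀)
    (hm₁_pos : ∀ ρ, 0 < m₁ ρ) (hm₂_pos : ∀ ρ, 0 < m₂ ρ)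
    (hm₁ : ∀ ρ μ, m₁ ρ ≤ C₀ * jap (ρ - μ) ^ N₀ * m₁ μ)
    (hm₂ : ∀ ρ μ, m₂ ρ ≤ C₀ * jap (ρ - μ) ^ N₀ * m₂ μ) :
    (∃ C' : ℝ, 0 < C' ∧ ∀ z zs t ts : Fin (2*n) → ℝ,
        M3 n J m₁ m₂ (z + t) (zs + ts)
          ≤ ENNReal.ofReal (C' * jap ((t, ts) : (Fin (2*n) → ℝ) × (Fin (2*n) → ℝ)) ^ (2 * N₀))
              * M3 n J m₁ m₂ z zs) ∧
      (∀ z₀ zs₀, M3 n J m₁ m₂ z₀ zs₀ ≠ ⊤ → ∀ z zs, M3 n J m₁ m₂ z zs ≠ ⊤) := by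
  have hN₀0 : (0:ℝ) ≤ N₀ := le_trans zero_le_one hN₀
  -- J is an isometry for the Euclidean structure
  have hself : ∀ v, dotp (J v) (J v) = dotp v v := by
    intro v
    rw [hJt v (J v), hJ2 v]
    simp [dotp, mul_neg]
  have hJnorm : ∀ v : Fin (2*n) → ℝ, ‖J v‖ ≤ Real.sqrt ((2*n : ℕ) : ℝ) * ‖v‖ := by
    intro v
    have e1 : ‖J v‖ ≤ Real.sqrt (dotp (J v) (J v)) := pi_norm_le_sqrt_dotp _ _
    rw [hself] at e1
    calc ‖J v‖ ≤ Real.sqrt (dotp v v) := e1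
      _ ≤ Real.sqrt (((2*n:ℕ):ℝ) * ‖v‖^2) := Real.sqrt_le_sqrt (dotp_le_card _ v)
      _ = Real.sqrt ((2*n:ℕ):ℝ) * ‖v‖ := by
          rw [Real.sqrt_mul (by positivity), Real.sqrt_sq (norm_nonneg v)]
  set K : ℝ := 1 + Real.sqrt ((2*n : ℕ) : ℝ) with hKdef
  have hK1 : (1:ℝ) ≤ K := le_add_of_nonneg_right (Real.sqrt_nonneg _)
  have hK0 : (0:ℝ) < K := lt_of_lt_of_le one_pos hK1
  have hs : ∀ t ts : Fin (2*n) → ℝ, jap (t + (2⁻¹:ℝ) • J ts)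
      ≤ K * jap ((t, ts) : (Fin (2*n) → ℝ) × (Fin (2*n) → ℝ)) := by
    intro t ts
    apply jap_le_mul hK1
    have h2 : ‖ts‖ ≤ ‖((t,ts):(Fin (2*n) → ℝ) × (Fin (2*n) → ℝ))‖ := norm_snd_le (t, ts)
    have h1 : ‖t‖ ≤ ‖((t,ts):(Fin (2*n) → ℝ) × (Fin (2*n) → ℝ))‖ := norm_fst_le (t, ts)
    have h3 : ‖(2⁻¹:ℝ) • J ts‖ = 2⁻¹ * ‖J ts‖ := by
      rw [norm_smul]; norm_num
    have h4 := hJnorm ts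
    have h5 : (0:ℝ) ≤ Real.sqrt ((2*n:ℕ):ℝ) := Real.sqrt_nonneg _
    calc ‖t + (2⁻¹:ℝ) • J ts‖ ≤ ‖t‖ + ‖(2⁻¹:ℝ) • J ts‖ := norm_add_le _ _
      _ ≤ ‖((t,ts):(Fin (2*n) → ℝ) × (Fin (2*n) → ℝ))‖
            + Real.sqrt ((2*n:ℕ):ℝ) * ‖((t,ts):(Fin (2*n) → ℝ) × (Fin (2*n) → ℝ))‖ := by
          rw [h3]
          have h6 : 2⁻¹ * ‖J ts‖ ≤ Real.sqrt ((2*n:ℕ):ℝ) * ‖ts‖ := by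
            nlinarith [norm_nonneg (J ts), norm_nonneg ts]
          nlinarith [mul_le_mul_of_nonneg_left h2 h5]
      _ = K * ‖((t,ts):(Fin (2*n) → ℝ) × (Fin (2*n) → ℝ))‖ := by rw [hKdef]; ring
  -- pointwise estimate
  have hpt : ∀ (z zs t ts x : Fin (2*n) → ℝ),
      m₁ (x + t, (zs + ts) + (2:ℝ) • J.symm (x - z)) *
          m₂ ((x + t) + (2⁻¹:ℝ) • J (zs + ts), -((2:ℝ) • J.symm (x - z)))
        ≤ (C₀^2 * K ^ N₀ * jap ((t,ts):(Fin (2*n) → ℝ) × (Fin (2*n) → ℝ)) ^ (2*N₀)) *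
            (m₁ (x, zs + (2:ℝ) • J.symm (x - z)) *
              m₂ (x + (2⁻¹:ℝ) • J zs, -((2:ℝ) • J.symm (x - z)))) := by
    intro z zs t ts x
    set w : Fin (2*n) → ℝ := (2:ℝ) • J.symm (x - z) with hw
    set a : ℝ := jap ((t,ts):(Fin (2*n) → ℝ) × (Fin (2*n) → ℝ)) with hadef
    have ha0 : (0:ℝ) < a := jap_pos _
    have haN : (0:ℝ) < a ^ N₀ := Real.rpow_pos_of_pos ha0 _
    have hKN : (0:ℝ) < K ^ N₀ := Real.rpow_pos_of_pos hK0 _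
    have h1 : m₁ (x + t, zs + ts + w) ≤ C₀ * a ^ N₀ * m₁ (x, zs + w) := by
      have h := hm₁ (x + t, zs + ts + w) (x, zs + w)
      have hd : ((x + t, zs + ts + w) : (Fin (2*n) → ℝ) × (Fin (2*n) → ℝ)) - (x, zs + w)
          = (t, ts) := by
        rw [Prod.mk_sub_mk]
        congr 1 <;> abel
      rwa [hd] at h
    have h2 : m₂ (x + t + (2⁻¹:ℝ) • J (zs + ts), -w)
        ≤ C₀ * (K ^ N₀ * a ^ N₀) * m₂ (x + (2⁻¹:ℝ) • J zs, -w) := by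
      have h := hm₂ (x + t + (2⁻¹:ℝ) • J (zs + ts), -w) (x + (2⁻¹:ℝ) • J zs, -w)
      have hd : ((x + t + (2⁻¹:ℝ) • J (zs + ts), -w) : (Fin (2*n) → ℝ) × (Fin (2*n) → ℝ))
          - (x + (2⁻¹:ℝ) • J zs, -w) = (t + (2⁻¹:ℝ) • J ts, 0) := by
        rw [Prod.mk_sub_mk]
        congr 1
        · rw [map_add, smul_add]; abel
        · abel
      rw [hd, jap_prod_zero] at h
      refine h.trans ?_
      have hj : jap (t + (2⁻¹:ℝ) • J ts) ^ N₀ ≤ K ^ N₀ * a ^ N₀ := by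
        rw [← Real.mul_rpow hK0.le ha0.le]
        exact Real.rpow_le_rpow (jap_pos _).le (hs t ts) hN₀0
      exact mul_le_mul_of_nonneg_right (mul_le_mul_of_nonneg_left hj hC₀.le) (hm₂_pos _).le
    have hmul := mul_le_mul h1 h2 (hm₂_pos _).le
      (mul_nonneg (mul_nonneg hC₀.le haN.le) (hm₁_pos _).le)
    refine hmul.trans (le_of_eq ?_)
    have haa : a ^ N₀ * a ^ N₀ = a ^ (2*N₀) := by
      rw [← Real.rpow_add ha0, two_mul]
    rw [← haa]; ring
  have hC' : (0:ℝ) < C₀^2 * K ^ N₀ :=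
    mul_pos (pow_pos hC₀ 2) (Real.rpow_pos_of_pos hK0 N₀)
  have key : ∀ z zs t ts : Fin (2*n) → ℝ,
      M3 n J m₁ m₂ (z + t) (zs + ts)
        ≤ ENNReal.ofReal ((C₀^2 * K ^ N₀) *
              jap ((t, ts) : (Fin (2*n) → ℝ) × (Fin (2*n) → ℝ)) ^ (2 * N₀))
            * M3 n J m₁ m₂ z zs := by
    intro z zs t ts
    have hrw : M3 n J m₁ m₂ (z + t) (zs + ts)
        = ∫⁻ x : Fin (2*n) → ℝ, ENNReal.ofReal
            (m₁ (x + t, (zs + ts) + (2:ℝ) • J.symm (x - z)) *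
              m₂ ((x + t) + (2⁻¹:ℝ) • J (zs + ts), -((2:ℝ) • J.symm (x - z)))) := by
      rw [M3, ← lintegral_add_right_eq_self (fun x : Fin (2*n) → ℝ => ENNReal.ofReal
        (m₁ (x, (zs + ts) + (2:ℝ) • J.symm (x - (z + t))) *
          m₂ (x + (2⁻¹:ℝ) • J (zs + ts), -((2:ℝ) • J.symm (x - (z + t)))))) t]
      refine lintegral_congr fun x => ?_
      have hx : x + t - (z + t) = x - z := by abel
      simp only [hx]
    rw [hrw, M3]
    have hcn : (0:ℝ) ≤ (C₀^2 * K ^ N₀) *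
        jap ((t, ts) : (Fin (2*n) → ℝ) × (Fin (2*n) → ℝ)) ^ (2 * N₀) :=
      mul_nonneg hC'.le (Real.rpow_nonneg (jap_pos _).le _)
    calc (∫⁻ x : Fin (2*n) → ℝ, ENNReal.ofReal
            (m₁ (x + t, (zs + ts) + (2:ℝ) • J.symm (x - z)) *
              m₂ ((x + t) + (2⁻¹:ℝ) • J (zs + ts), -((2:ℝ) • J.symm (x - z)))))
        ≤ ∫⁻ x : Fin (2*n) → ℝ, ENNReal.ofReal ((C₀^2 * K ^ N₀) *
              jap ((t, ts) : (Fin (2*n) → ℝ) × (Fin (2*n) → ℝ)) ^ (2 * N₀)) *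
            ENNReal.ofReal
              (m₁ (x, zs + (2:ℝ) • J.symm (x - z)) *
                m₂ (x + (2⁻¹:ℝ) • J zs, -((2:ℝ) • J.symm (x - z)))) := by
          refine lintegral_mono fun x => ?_
          rw [← ENNReal.ofReal_mul hcn]
          exact ENNReal.ofReal_le_ofReal (hpt z zs t ts x)
      _ = _ := lintegral_const_mul' _ _ ENNReal.ofReal_ne_top
  refine ⟨⟨C₀^2 * K ^ N₀, hC', key⟩, ?_⟩
  intro z₀ zs₀ h z zs
  have hk := key z₀ zs₀ (z - z₀) (zs - zs₀)
  rw [add_sub_cancel, add_sub_cancel] at hk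
  exact ne_top_of_le_ne_top (ENNReal.mul_ne_top ENNReal.ofReal_ne_top h) hk
end

section
/- Let Γ = ℤ^{2d} and m an order function on ℝ^{2d} × (ℝ^{2d})*. Suppose ∑_{δ∈Γ} (∑_{γ∈Γ} m(γ/2, δ)^p)^{1/p} < ∞ for some 1 ≤ p < ∞ (sum over translated diagonals of ℓ^p norms). Then every matrix (a_{α,β})_{α,β∈Γ} with |a_{α,β}| ≤ m((α+β)/2, J^{−1}(β−α)) belongs to the Schatten class C_p(ℓ²(Γ)), with ‖(a_{α,β})‖_{C_p} ≤ ∑_{δ∈Γ} ‖m(·/2, J^{-1}δ)‖_{ℓ^p(Γ_δ)}, where Γ_δ = {(α,β): β − α = δ}. -/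
/-!
Split the matrix into its translated diagonals. The diagonal `β - α = δ` is the weighted shift
`u ↦ (α ↦ a(α, α + δ) u(α + δ))`. For orthonormal families `(e_j)`, `(f_j)` one has
`|⟪B e_j, f_j⟫| ≤ ∑_α c_{jα} |a(α, α + δ)|` with `c_{jα} = |e_j(α + δ)| |f_j(α)|`; by AM-GM, the
unit norms of `e_j, f_j` and Bessel's inequality, `c` is doubly substochastic, so Jensen's
inequality bounds the `C_p` norm of the diagonal by the `ℓ^p` norm of its entries. The operator
norms of the diagonals are summable, and by Minkowski's inequality the `C_p` norm of a convergent
series of operators is at most the sum of the `C_p` norms.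
-/

open scoped ENNReal

/-- The Schatten `p`-norm (`1 ≤ p ≤ ∞`) of a bounded operator on a complex
Hilbert space. -/
noncomputable def schattenNorm {H : Type*} [NormedAddCommGroup H]
    [InnerProductSpace ℂ H] (p : ℝ≥0∞) (T : H →L[ℂ] H) : ℝ≥0∞ :=
  if p = ∞ then (‖T‖₊ : ℝ≥0∞)
  else
    ⨆ (k : ℕ) (e : Fin k → H) (f : Fin k → H) (_ : Orthonormal ℂ e)
        (_ : Orthonormal ℂ f),
      (∑ j, (‖(inner ℂ (T (e j)) (f j) : ℂ)‖₊ : ℝ≥0∞) ^ p.toReal) ^ (1 / p.toReal)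

/-- Coercion of a lattice point of `ℤ^{2d}` to `ℝ^{2d}`. -/
def cv {k : ℕ} (α : Fin k → ℤ) : Fin k → ℝ := fun i => (α i : ℝ)

open scoped lp InnerProductSpace

namespace ENNReal

variable {ι : Type*}

lemma le_tsum_rpow_rpow_one_div {p : ℝ} (hp : 0 < p) (x : ι → ℝ≥0∞) (i : ι) :
    x i ≤ (∑' j, x j ^ p) ^ (1 / p) := by
  calc x i = (x i ^ p) ^ (1 / p) := by rw [← rpow_mul, mul_one_div_cancel hp.ne', rpow_one]
    _ ≤ _ := by gcongr; exact ENNReal.le_tsum i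

lemma tsum_mul_rpow_le {p : ℝ} (hp : 1 ≤ p) (c x : ι → ℝ≥0∞) (hc : ∑' i, c i ≤ 1) :
    (∑' i, c i * x i) ^ p ≤ ∑' i, c i * x i ^ p := by
  have hp0 : 0 < p := one_pos.trans_le hp
  suffices ∑' i, c i * x i ≤ (∑' i, c i * x i ^ p) ^ p⁻¹ by
    simpa [← rpow_mul, inv_mul_cancel₀ hp0.ne'] using rpow_le_rpow this hp0.le
  rw [ENNReal.tsum_eq_iSup_sum]
  refine iSup_le fun s => (inner_le_weight_mul_Lp_of_nonneg s hp c x).trans ?_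
  calc (∑ i ∈ s, c i) ^ (1 - p⁻¹) * (∑ i ∈ s, c i * x i ^ p) ^ p⁻¹
      ≤ 1 * (∑' i, c i * x i ^ p) ^ p⁻¹ := by
        gcongr
        · exact rpow_le_one ((ENNReal.sum_le_tsum s).trans hc)
            (sub_nonneg.2 (inv_le_one_of_one_le₀ hp))
        · exact ENNReal.sum_le_tsum s
    _ = _ := one_mul _

lemma two_mul_le_add_sq (a b : ℝ≥0∞) : 2 * a * b ≤ a ^ 2 + b ^ 2 := by
  induction a using recTopCoe with
  | top => simp
  | coe a =>
    induction b using recTopCoe with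
    | top => simp
    | coe b => exact_mod_cast _root_.two_mul_le_add_sq a b

lemma tsum_mul_le_one_of_tsum_sq_le_one {x y : ι → ℝ≥0∞} (hx : ∑' i, x i ^ 2 ≤ 1)
    (hy : ∑' i, y i ^ 2 ≤ 1) : ∑' i, x i * y i ≤ 1 := by
  have h : 2 * ∑' i, x i * y i ≤ 2 * 1 :=
    calc 2 * ∑' i, x i * y i = ∑' i, 2 * x i * y i := by
          rw [← ENNReal.tsum_mul_left]; simp only [mul_assoc]
      _ ≤ ∑' i, (x i ^ 2 + y i ^ 2) := ENNReal.tsum_le_tsum fun i => two_mul_le_add_sq _ _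
      _ = ∑' i, x i ^ 2 + ∑' i, y i ^ 2 := ENNReal.tsum_add
      _ ≤ 2 * 1 := by rw [two_mul]; gcongr
  exact (ENNReal.mul_le_mul_iff_right two_ne_zero ofNat_ne_top).1 h

/-- A doubly substochastic matrix contracts `ℓ^p` norms. -/
lemma sum_tsum_mul_rpow_le {κ : Type*} [Fintype κ] {p : ℝ} (hp : 1 ≤ p) (c : κ → ι → ℝ≥0∞)
    (x : ι → ℝ≥0∞) (hrow : ∀ j, ∑' i, c j i ≤ 1) (hcol : ∀ i, ∑ j, c j i ≤ 1) :
    ∑ j, (∑' i, c j i * x i) ^ p ≤ ∑' i, x i ^ p :=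
  calc ∑ j, (∑' i, c j i * x i) ^ p ≤ ∑ j, ∑' i, c j i * x i ^ p :=
        Finset.sum_le_sum fun j _ => tsum_mul_rpow_le hp _ _ (hrow j)
    _ = ∑' i, (∑ j, c j i) * x i ^ p := by
        rw [← Summable.tsum_finsetSum fun j _ => ENNReal.summable]
        simp only [Finset.sum_mul]
    _ ≤ ∑' i, 1 * x i ^ p := ENNReal.tsum_le_tsum fun i => by gcongr; exact hcol i
    _ = ∑' i, x i ^ p := by simp only [one_mul]

lemma Lp_tsum_le {κ : Type*} [Fintype κ] {p : ℝ} (hp : 1 ≤ p) (x : ι → κ → ℝ≥0∞) :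
    (∑ j, (∑' i, x i j) ^ p) ^ (1 / p) ≤ ∑' i, (∑ j, x i j ^ p) ^ (1 / p) := by
  set N : (κ → ℝ≥0∞) → ℝ≥0∞ := fun v => (∑ j, v j ^ p) ^ (1 / p)
  have hN : Continuous N := by fun_prop
  have hsub : ∀ s : Finset ι, N (∑ i ∈ s, x i) ≤ ∑ i ∈ s, N (x i) := fun s =>
    Finset.le_sum_of_subadditive N (by simp [N, one_pos.trans_le hp])
      (fun v w => Lp_add_le _ _ _ hp) s x
  have hx : Summable x := Pi.summable.2 fun j => ENNReal.summable
  have hlim := (hN.tendsto _).comp hx.hasSum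
  change N (fun j => ∑' i, x i j) ≤ _
  rw [show (fun j => ∑' i, x i j) = ∑' i, x i from funext fun j => (tsum_apply hx).symm]
  exact le_of_tendsto' hlim fun s => (hsub s).trans (ENNReal.sum_le_tsum s)

end ENNReal

namespace lp

variable {ι 𝕜 : Type*} [RCLike 𝕜]

lemma tsum_enorm_sq (u : ℓ²(ι, 𝕜)) : ∑' i, ‖u i‖ₑ ^ 2 = ‖u‖ₑ ^ 2 := by
  have h := lp.hasSum_norm (p := 2) (by norm_num) u
  simp only [ENNReal.toReal_ofNat, Real.rpow_two] at h
  simp_rw [← ofReal_norm, ← ENNReal.ofReal_pow (norm_nonneg _)]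
  exact (ENNReal.ofReal_tsum_of_nonneg (fun i => by positivity) h.summable).symm.trans
    (congrArg _ h.tsum_eq)

lemma _root_.Orthonormal.sum_enorm_apply_sq_le {κ : Type*} [Fintype κ] {e : κ → ℓ²(ι, 𝕜)}
    (he : Orthonormal 𝕜 e) (i : ι) : ∑ j, ‖e j i‖ₑ ^ 2 ≤ 1 := by
  classical
  have h := he.sum_inner_products_le (lp.single 2 i (1 : 𝕜)) (s := Finset.univ)
  simp only [lp.inner_single_right, one_mul, RCLike.inner_apply, RCLike.norm_conj] at h
  rw [lp.norm_single (by norm_num), norm_one, one_pow] at h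
  simp_rw [← ofReal_norm, ← ENNReal.ofReal_pow (norm_nonneg _)]
  rw [← ENNReal.ofReal_sum_of_nonneg fun j _ => by positivity]
  exact ENNReal.ofReal_le_one.2 h

variable (w : ℓ^∞(ι, 𝕜)) (σ : ι ≃ ι)

lemma sum_norm_mul_apply_sq_le (u : ℓ²(ι, 𝕜)) (s : Finset ι) :
    ∑ i ∈ s, ‖w i * u (σ i)‖ ^ (2 : ℝ≥0∞).toReal ≤ (‖w‖ * ‖u‖) ^ (2 : ℝ≥0∞).toReal := by
  simp only [ENNReal.toReal_ofNat, Real.rpow_two]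
  calc ∑ i ∈ s, ‖w i * u (σ i)‖ ^ 2 ≤ ∑ i ∈ s, ‖w‖ ^ 2 * ‖u (σ i)‖ ^ 2 := by
        gcongr with i
        rw [norm_mul, mul_pow]
        gcongr
        exact lp.norm_apply_le_norm ENNReal.top_ne_zero w i
    _ = ‖w‖ ^ 2 * ∑ i ∈ s.map σ.toEmbedding, ‖u i‖ ^ 2 := by
        rw [Finset.sum_map, Finset.mul_sum]; rfl
    _ ≤ ‖w‖ ^ 2 * ‖u‖ ^ 2 := by
        gcongr
        simpa using lp.sum_rpow_le_norm_rpow (p := 2) (by norm_num) u (s.map σ.toEmbedding)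
    _ = (‖w‖ * ‖u‖) ^ 2 := (mul_pow _ _ _).symm

noncomputable def weightedShift : ℓ²(ι, 𝕜) →L[𝕜] ℓ²(ι, 𝕜) :=
  LinearMap.mkContinuous
    { toFun u := ⟨fun i => w i * u (σ i), memℓp_gen' (sum_norm_mul_apply_sq_le w σ u)⟩
      map_add' u v := by ext i; simp [mul_add]; rfl
      map_smul' c u := by ext i; simp [mul_left_comm] }
    ‖w‖
    fun u => lp.norm_le_of_forall_sum_le (by norm_num) (by positivity)
      (sum_norm_mul_apply_sq_le w σ u)

@[simp] lemma weightedShift_apply (u : ℓ²(ι, 𝕜)) (i : ι) :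
    weightedShift w σ u i = w i * u (σ i) := rfl

lemma norm_weightedShift_le : ‖weightedShift w σ‖ ≤ ‖w‖ :=
  LinearMap.mkContinuous_norm_le _ (norm_nonneg w) _

lemma tsum_apply_of_summable {κ : Type*} {T : κ → ℓ²(ι, 𝕜) →L[𝕜] ℓ²(ι, 𝕜)} (hT : Summable T)
    (u : ℓ²(ι, 𝕜)) (i : ι) : (∑' k, T k) u i = ∑' k, T k u i :=
  ((lp.evalCLM 𝕜 (fun _ : ι => 𝕜) 2 i).comp (ContinuousLinearMap.apply 𝕜 _ u)).map_tsum hT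

end lp

section Schatten

variable {H : Type*} [NormedAddCommGroup H] [InnerProductSpace ℂ H]

lemma schattenNorm_ofReal_le_iff {p : ℝ} (hp : 0 ≤ p) {T : H →L[ℂ] H} {C : ℝ≥0∞} :
    schattenNorm (ENNReal.ofReal p) T ≤ C ↔
      ∀ (k : ℕ) (e f : Fin k → H), Orthonormal ℂ e → Orthonormal ℂ f →
        (∑ j, ‖⟪T (e j), f j⟫_ℂ‖ₑ ^ p) ^ (1 / p) ≤ C := by
  simp only [schattenNorm, ENNReal.ofReal_ne_top, if_false, ENNReal.toReal_ofReal hp, iSup_le_iff,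
    enorm_eq_nnnorm]

lemma schattenNorm_tsum_le [CompleteSpace H] {ι : Type*} {T : ι → H →L[ℂ] H} (hT : Summable T)
    {p : ℝ} (hp : 1 ≤ p) :
    schattenNorm (ENNReal.ofReal p) (∑' i, T i) ≤ ∑' i, schattenNorm (ENNReal.ofReal p) (T i) := by
  have hp0 : 0 ≤ p := zero_le_one.trans hp
  refine (schattenNorm_ofReal_le_iff hp0).2 fun k e f he hf => ?_
  have hsymm : ∀ x y : H, ‖⟪x, y⟫_ℂ‖ₑ = ‖⟪y, x⟫_ℂ‖ₑ := fun x y => by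
    rw [← ofReal_norm, norm_inner_symm, ofReal_norm]
  have hinner : ∀ j, ‖⟪(∑' i, T i) (e j), f j⟫_ℂ‖ₑ ≤ ∑' i, ‖⟪T i (e j), f j⟫_ℂ‖ₑ := fun j => by
    have hsum : ⟪f j, (∑' i, T i) (e j)⟫_ℂ = ∑' i, ⟪f j, T i (e j)⟫_ℂ :=
      ((innerSL ℂ (f j)).comp (ContinuousLinearMap.apply ℂ H (e j))).map_tsum hT
    simp only [hsymm _ (f j), hsum]
    exact enorm_tsum_le_tsum_enorm
  calc (∑ j, ‖⟪(∑' i, T i) (e j), f j⟫_ℂ‖ₑ ^ p) ^ (1 / p)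
      ≤ (∑ j, (∑' i, ‖⟪T i (e j), f j⟫_ℂ‖ₑ) ^ p) ^ (1 / p) := by gcongr with j; exact hinner j
    _ ≤ ∑' i, (∑ j, ‖⟪T i (e j), f j⟫_ℂ‖ₑ ^ p) ^ (1 / p) := ENNReal.Lp_tsum_le hp _
    _ ≤ ∑' i, schattenNorm (ENNReal.ofReal p) (T i) := ENNReal.tsum_le_tsum fun i =>
        (schattenNorm_ofReal_le_iff hp0).1 le_rfl k e f he hf

end Schatten

namespace lp

variable {ι : Type*} (w : ℓ^∞(ι, ℂ)) (σ : ι ≃ ι)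

lemma sum_enorm_inner_weightedShift_rpow_le {κ : Type*} [Fintype κ] {p : ℝ} (hp : 1 ≤ p)
    {e f : κ → ℓ²(ι, ℂ)} (he : Orthonormal ℂ e) (hf : Orthonormal ℂ f) :
    ∑ j, ‖⟪weightedShift w σ (e j), f j⟫_ℂ‖ₑ ^ p ≤ ∑' i, ‖w i‖ₑ ^ p := by
  set c : κ → ι → ℝ≥0∞ := fun j i => ‖e j (σ i)‖ₑ * ‖f j i‖ₑ
  have hbound : ∀ j, ‖⟪weightedShift w σ (e j), f j⟫_ℂ‖ₑ ≤ ∑' i, c j i * ‖w i‖ₑ := fun j => by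
    rw [lp.inner_eq_tsum]
    refine enorm_tsum_le_tsum_enorm.trans (ENNReal.tsum_le_tsum fun i => le_of_eq ?_)
    simp only [weightedShift_apply, RCLike.inner_apply, map_mul, enorm_mul, RCLike.enorm_conj, c]
    ring
  have hunit : ∀ {v : κ → ℓ²(ι, ℂ)}, Orthonormal ℂ v → ∀ j, ∑' i, ‖v j i‖ₑ ^ 2 = 1 := fun hv j => by
    rw [lp.tsum_enorm_sq, ← ofReal_norm, hv.1 j, ENNReal.ofReal_one, one_pow]
  have hrow : ∀ j, ∑' i, c j i ≤ 1 := fun j =>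
    ENNReal.tsum_mul_le_one_of_tsum_sq_le_one
      ((σ.tsum_eq fun i => ‖e j i‖ₑ ^ 2).trans (hunit he j)).le (hunit hf j).le
  have hcol : ∀ i, ∑ j, c j i ≤ 1 := fun i => by
    rw [← tsum_fintype (L := .unconditional _)]
    exact ENNReal.tsum_mul_le_one_of_tsum_sq_le_one
      (by rw [tsum_fintype]; exact he.sum_enorm_apply_sq_le (σ i))
      (by rw [tsum_fintype]; exact hf.sum_enorm_apply_sq_le i)
  calc ∑ j, ‖⟪weightedShift w σ (e j), f j⟫_ℂ‖ₑ ^ p ≤ ∑ j, (∑' i, c j i * ‖w i‖ₑ) ^ p := by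
        gcongr with j; exact hbound j
    _ ≤ ∑' i, ‖w i‖ₑ ^ p := ENNReal.sum_tsum_mul_rpow_le hp c _ hrow hcol

lemma schattenNorm_weightedShift_le {p : ℝ} (hp : 1 ≤ p) :
    schattenNorm (ENNReal.ofReal p) (weightedShift w σ) ≤ (∑' i, ‖w i‖ₑ ^ p) ^ (1 / p) :=
  (schattenNorm_ofReal_le_iff (zero_le_one.trans hp)).2 fun _ _ _ he hf => by
    gcongr; exact sum_enorm_inner_weightedShift_rpow_le w σ hp he hf

end lp

lemma cv_add {k : ℕ} (α β : Fin k → ℤ) : cv (α + β) = cv α + cv β := by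
  funext i; simp [cv]

theorem stmt15_general (d : ℕ)
    (J : (Fin (2*d) → ℝ) ≃ₗ[ℝ] (Fin (2*d) → ℝ))
    (m : (Fin (2*d) → ℝ) × (Fin (2*d) → ℝ) → ℝ)
    (p : ℝ) (hp : 1 ≤ p)
    (hS : ∑' δ : Fin (2*d) → ℤ,
        (∑' α : Fin (2*d) → ℤ,
            ENNReal.ofReal (m (cv α + (2⁻¹:ℝ) • cv δ, J.symm (cv δ))) ^ p) ^ (1/p) ≠ ⊤)
    (a : (Fin (2*d) → ℤ) → (Fin (2*d) → ℤ) → ℂ)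
    (ha : ∀ α β, ‖a α β‖ ≤ m ((2⁻¹:ℝ) • (cv α + cv β), J.symm (cv β - cv α))) :
    ∃ T : lp (fun _ : Fin (2*d) → ℤ => ℂ) 2 →L[ℂ] lp (fun _ : Fin (2*d) → ℤ => ℂ) 2,
      (∀ (u : lp (fun _ : Fin (2*d) → ℤ => ℂ) 2) (α : Fin (2*d) → ℤ),
          (T u : ∀ _ : Fin (2*d) → ℤ, ℂ) α = ∑' β, a α β * (u : ∀ _ : Fin (2*d) → ℤ, ℂ) β) ∧
        schattenNorm (ENNReal.ofReal p) T
          ≤ ∑' δ : Fin (2*d) → ℤ,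
              (∑' α : Fin (2*d) → ℤ,
                  ENNReal.ofReal (m (cv α + (2⁻¹:ℝ) • cv δ, J.symm (cv δ))) ^ p) ^ (1/p) := by
  set g : (Fin (2*d) → ℤ) → ℝ≥0∞ := fun δ =>
    (∑' α, ENNReal.ofReal (m (cv α + (2⁻¹:ℝ) • cv δ, J.symm (cv δ))) ^ p) ^ (1/p)
  have hdiag : ∀ δ α, ‖a α (α + δ)‖ₑ ≤ ENNReal.ofReal (m (cv α + (2⁻¹:ℝ) • cv δ, J.symm (cv δ))) :=
    fun δ α => by
      rw [← ofReal_norm]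
      refine ENNReal.ofReal_le_ofReal ((ha α (α + δ)).trans_eq ?_)
      simp only [cv_add]
      congr 3 <;> module
  have hdiag_norm : ∀ δ α, ‖a α (α + δ)‖ ≤ (g δ).toReal := fun δ α => by
    rw [← toReal_enorm]
    exact ENNReal.toReal_mono (ENNReal.ne_top_of_tsum_ne_top hS δ)
      ((hdiag δ α).trans (ENNReal.le_tsum_rpow_rpow_one_div (by linarith) _ α))
  let w : (Fin (2*d) → ℤ) → ℓ^∞(Fin (2*d) → ℤ, ℂ) := fun δ =>
    ⟨fun α => a α (α + δ), memℓp_infty ⟨_, Set.forall_mem_range.2 (hdiag_norm δ)⟩⟩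
  let B := fun δ => lp.weightedShift (w δ) (Equiv.addRight δ)
  have hB : Summable B := (ENNReal.summable_toReal hS).of_norm_bounded fun δ =>
    (lp.norm_weightedShift_le _ _).trans
      (lp.norm_le_of_forall_le ENNReal.toReal_nonneg (hdiag_norm δ))
  refine ⟨∑' δ, B δ, fun u α => ?_, ?_⟩
  · rw [lp.tsum_apply_of_summable hB]
    exact (Equiv.addLeft α).tsum_eq fun β => a α β * u β
  · calc schattenNorm (ENNReal.ofReal p) (∑' δ, B δ)
        ≤ ∑' δ, schattenNorm (ENNReal.ofReal p) (B δ) := schattenNorm_tsum_le hB hp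
      _ ≤ ∑' δ, (∑' α, ‖a α (α + δ)‖ₑ ^ p) ^ (1 / p) :=
          ENNReal.tsum_le_tsum fun δ => lp.schattenNorm_weightedShift_le _ _ hp
      _ ≤ ∑' δ, g δ := ENNReal.tsum_le_tsum fun δ => by
          simp only [g]
          gcongr with α
          exact hdiag δ α

/-- If the translated diagonals of `m ∘ q` have summable `ℓ^p` norms, then any
matrix dominated by `m ∘ q`, `q(α,β) = ((α+β)/2, J⁻¹(β−α))`, defines an
operator of Schatten class `C_p` on `ℓ²(ℤ^{2d})`, with `C_p` norm bounded by
the sum of the `ℓ^p` norms of the translated diagonals. -/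
theorem stmt15 (d : ℕ)
    (J : (Fin (2*d) → ℝ) ≃ₗ[ℝ] (Fin (2*d) → ℝ))
    (m : (Fin (2*d) → ℝ) × (Fin (2*d) → ℝ) → ℝ)
    (C₀ N₀ : ℝ) (hC₀ : 0 < C₀) (hN₀ : 1 ≤ N₀)
    (hm_pos : ∀ ρ, 0 < m ρ)
    (hm : ∀ ρ μ, m ρ ≤ C₀ * jap (ρ - μ) ^ N₀ * m μ)
    (p : ℝ) (hp : 1 ≤ p)
    (hS : ∑' δ : Fin (2*d) → ℤ,
        (∑' α : Fin (2*d) → ℤ,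
            ENNReal.ofReal (m (cv α + (2⁻¹:ℝ) • cv δ, J.symm (cv δ))) ^ p) ^ (1/p) ≠ ⊤)
    (a : (Fin (2*d) → ℤ) → (Fin (2*d) → ℤ) → ℂ)
    (ha : ∀ α β, ‖a α β‖ ≤ m ((2⁻¹:ℝ) • (cv α + cv β), J.symm (cv β - cv α))) :
    ∃ T : lp (fun _ : Fin (2*d) → ℤ => ℂ) 2 →L[ℂ] lp (fun _ : Fin (2*d) → ℤ => ℂ) 2,
      (∀ (u : lp (fun _ : Fin (2*d) → ℤ => ℂ) 2) (α : Fin (2*d) → ℤ),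
          (T u : ∀ _ : Fin (2*d) → ℤ, ℂ) α = ∑' β, a α β * (u : ∀ _ : Fin (2*d) → ℤ, ℂ) β) ∧
        schattenNorm (ENNReal.ofReal p) T
          ≤ ∑' δ : Fin (2*d) → ℤ,
              (∑' α : Fin (2*d) → ℤ,
                  ENNReal.ofReal (m (cv α + (2⁻¹:ℝ) • cv δ, J.symm (cv δ))) ^ p) ^ (1/p) :=
  stmt15_general d J m p hp hS a ha
end
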